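/- arXiv:1306.5724 — 2 statements merged into one kernel-verified Lean document; each statement's English description precedes it below -/
import Mathlib

section
/- For every n ≥ 0, the free abelian group of rank n is the group of fractions of a unique Garside monoid up to isomorphism: the monoid (ℕⁿ, +) is a Garside monoid whose group of fractions is (ℤⁿ, +), and every Garside monoid M admitting an injective monoid homomorphism ι : M → ℤⁿ such that every element of ℤⁿ equals −ι(a) + ι(b) for some a, b ∈ M is isomorphic as a monoid to (ℕⁿ, +). -/
/-- `a` left-divides `b`. -/
def LeftDvd {M : Type*} [Monoid M] (a b : M) : Prop := ∃ c, b = a * c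

/-- `a` right-divides `b`. -/
def RightDvd' {M : Type*} [Monoid M] (a b : M) : Prop := ∃ c, b = c * a

/-- `c` is a right lcm of `a` and `b` (least common upper bound for left-divisibility). -/
def IsRightLcm {M : Type*} [Monoid M] (a b c : M) : Prop :=
  LeftDvd a c ∧ LeftDvd b c ∧ ∀ d, LeftDvd a d → LeftDvd b d → LeftDvd c d

/-- `c` is a left lcm of `a` and `b` (least common upper bound for right-divisibility). -/
def IsLeftLcm {M : Type*} [Monoid M] (a b c : M) : Prop :=
  RightDvd' a c ∧ RightDvd' b c ∧ ∀ d, RightDvd' a d → RightDvd' b d → RightDvd' c d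

/-- `Δ` is a Garside element: its left-divisors coincide with its right-divisors,
they form a finite set, and this set generates `M`. -/
def IsGarsideElement {M : Type*} [Monoid M] (Δ : M) : Prop :=
  {d | LeftDvd d Δ} = {d | RightDvd' d Δ} ∧
  {d | LeftDvd d Δ}.Finite ∧
  Submonoid.closure {d | LeftDvd d Δ} = ⊤

/-- A Garside monoid: cancellative, conical, atomic, with right and left lcms,
admitting a Garside element. -/
structure IsGarsideMonoid (M : Type*) [Monoid M] : Prop where
  mul_left_cancel : ∀ a b c : M, a * b = a * c → b = c
  mul_right_cancel : ∀ a b c : M, b * a = c * a → b = c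
  conical : ∀ a : M, IsUnit a → a = 1
  atomic : ∃ ν : M → ℕ, (∀ a : M, a ≠ 1 → 0 < ν a) ∧ ∀ a b : M, ν a + ν b ≤ ν (a * b)
  right_lcm : ∀ a b : M, ∃ c, IsRightLcm a b c
  left_lcm : ∀ a b : M, ∃ c, IsLeftLcm a b c
  garside : ∃ Δ : M, IsGarsideElement Δ

/-- A Garside structure on a group `G`: a Garside monoid together with an embedding
into `G` realizing `G` as its group of (left) fractions. -/
structure GarsideStructure (G : Type u) [Group G] where
  M : Type u
  [instM : Monoid M]
  garside : IsGarsideMonoid M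
  ι : M →* G
  inj : Function.Injective ι
  frac : ∀ g : G, ∃ a b : M, g = (ι a)⁻¹ * ι b

/-- A group is Garside if it is the group of fractions of some Garside monoid. -/
def IsGarsideGroup (G : Type u) [Group G] : Prop := Nonempty (GarsideStructure G)

/-!
`ℕⁿ` is a Garside monoid with Garside element `(1, …, 1)`: divisibility is the coordinatewise
order and lcms are coordinatewise maxima.

Conversely, a Garside monoid `M` embedded in `ℤⁿ` is commutative. In a cancellative commutative
monoid, right lcms make every element primal, so distinct atoms are coprime and the exponents in a
product of atom powers are determined. Atoms lie in every generating set, hence among the finitely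
many divisors of `Δ`, and atomicity makes every element a product of atoms; so `M ≅ ℕ^A` for its
set `A` of atoms. The `ℤ`-linear extension of `ℕ^A → ℤⁿ` is then bijective, whence `|A| = n`.
-/

open Multiplicative

section CommMonoid

variable {M : Type*} [CommMonoid M] {a b c : M}

theorem leftDvd_iff_dvd : LeftDvd a b ↔ a ∣ b := Iff.rfl

theorem rightDvd'_iff_dvd : RightDvd' a b ↔ a ∣ b := by
  simp only [RightDvd', mul_comm _ a]
  rfl

theorem isLeftLcm_iff_isRightLcm : IsLeftLcm a b c ↔ IsRightLcm a b c := by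
  simp only [IsLeftLcm, IsRightLcm, rightDvd'_iff_dvd, leftDvd_iff_dvd]

end CommMonoid

section NatPi

variable {ι : Type*}

theorem Multiplicative.dvd_iff_toAdd_le {a b : Multiplicative (ι → ℕ)} :
    a ∣ b ↔ a.toAdd ≤ b.toAdd := by
  refine ⟨fun ⟨c, hc⟩ => hc ▸ le_self_add, fun h => ⟨ofAdd (b.toAdd - a.toAdd), ?_⟩⟩
  exact toAdd.injective (add_tsub_cancel_of_le h).symm

theorem Multiplicative.prod_ofAdd_single_pow [Fintype ι] [DecidableEq ι]
    (x : Multiplicative (ι → ℕ)) : ∏ i, ofAdd (Pi.single i 1) ^ x.toAdd i = x := by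
  apply toAdd.injective
  simp only [toAdd_prod, toAdd_pow, toAdd_ofAdd, ← Pi.single_smul, smul_eq_mul, mul_one]
  exact Finset.univ_sum_single _

theorem Multiplicative.isRightLcm_ofAdd_sup (a b : Multiplicative (ι → ℕ)) :
    IsRightLcm a b (ofAdd (a.toAdd ⊔ b.toAdd)) := by
  simp only [IsRightLcm, leftDvd_iff_dvd, dvd_iff_toAdd_le, toAdd_ofAdd]
  exact ⟨le_sup_left, le_sup_right, fun _ => sup_le⟩

theorem isGarsideMonoid_multiplicative_pi_nat [Fintype ι] :
    IsGarsideMonoid (Multiplicative (ι → ℕ)) where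
  mul_left_cancel _ _ _ := mul_left_cancel
  mul_right_cancel _ _ _ := mul_right_cancel
  conical a ha := by
    have := dvd_iff_toAdd_le.mp (isUnit_iff_dvd_one.mp ha)
    exact toAdd.injective (le_antisymm this bot_le)
  atomic := by
    refine ⟨fun a => ∑ i, a.toAdd i, fun a ha => ?_, fun a b => ?_⟩
    · refine pos_iff_ne_zero.mpr fun h => ha (toAdd.injective ?_)
      exact funext fun i => Finset.sum_eq_zero_iff.mp h i (Finset.mem_univ i)
    · simp only [toAdd_mul, Pi.add_apply, Finset.sum_add_distrib, le_refl]
  right_lcm a b := ⟨_, isRightLcm_ofAdd_sup a b⟩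
  left_lcm a b := ⟨_, isLeftLcm_iff_isRightLcm.mpr (isRightLcm_ofAdd_sup a b)⟩
  garside := by
    classical
    refine ⟨ofAdd 1, ?_, ?_, ?_⟩
    · simp only [leftDvd_iff_dvd, rightDvd'_iff_dvd]
    · simp only [leftDvd_iff_dvd, dvd_iff_toAdd_le, toAdd_ofAdd]
      exact (Set.finite_Iic 1).preimage toAdd.injective.injOn
    · refine eq_top_iff.mpr fun x _ => ?_
      refine Submonoid.closure_mono ?_ (Submonoid.mem_closure_range_iff_of_fintype.mpr
        ⟨x.toAdd, (prod_ofAdd_single_pow x).symm⟩)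
      rintro _ ⟨i, rfl⟩
      simp only [leftDvd_iff_dvd, dvd_iff_toAdd_le, toAdd_ofAdd]
      intro j
      by_cases h : j = i <;> simp [h]

theorem exists_injective_forall_eq_inv_mul_pi_int (ι : Type*) :
    ∃ φ : Multiplicative (ι → ℕ) →* Multiplicative (ι → ℤ), Function.Injective φ ∧
      ∀ g, ∃ a b, g = (φ a)⁻¹ * φ b := by
  refine ⟨((Nat.castAddMonoidHom ℤ).compLeft ι).toMultiplicative,
    fun a b h => toAdd.injective <| funext fun i =>
      Nat.cast_injective (R := ℤ) (congrFun (congrArg toAdd h) i), fun g => ?_⟩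
  refine ⟨ofAdd fun i => (-g.toAdd i).toNat, ofAdd fun i => (g.toAdd i).toNat, ?_⟩
  refine toAdd.injective (funext fun i => ?_)
  simp [neg_add_eq_sub]

end NatPi

section CancelCommMonoid

variable {M : Type*} [CancelCommMonoid M]

/-- With `l = a * u = b * v` the lcm of `a` and `b`, any `a ∣ b * c` splits as
`a = w * v` with `b = u * w` and `v ∣ c`. -/
theorem decompositionMonoid_of_forall_isRightLcm (hlcm : ∀ a b : M, ∃ c, IsRightLcm a b c) :
    DecompositionMonoid M where
  primal a b c h := by
    obtain ⟨l, ⟨u, hu⟩, ⟨v, hv⟩, hmin⟩ := hlcm a b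
    obtain ⟨w, hw⟩ := hmin (a * b) ⟨b, rfl⟩ ⟨a, mul_comm a b⟩
    obtain ⟨t, ht⟩ := hmin (b * c) h ⟨c, rfl⟩
    have hb : b = u * w := mul_left_cancel (a := a) (by rw [hw, hu, mul_assoc])
    have ha : a = w * v :=
      mul_left_cancel (a := u) (by rw [mul_comm u a, ← hu, hv, hb, mul_assoc])
    have hc : c = v * t := mul_left_cancel (a := b) (by rw [ht, hv, mul_assoc])
    exact ⟨w, v, ⟨u, hb.trans (mul_comm u w)⟩, ⟨t, hc⟩, ha⟩

theorem eq_of_pow_mul_eq_pow_mul {p u v : M} {m n : ℕ} (hp : ¬IsUnit p)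
    (hu : IsRelPrime p u) (hv : IsRelPrime p v) (h : p ^ m * u = p ^ n * v) : m = n := by
  wlog hmn : m ≤ n generalizing m n u v
  · exact (this hv hu h.symm (le_of_not_ge hmn)).symm
  obtain ⟨k, rfl⟩ := Nat.exists_eq_add_of_le hmn
  rw [pow_add, mul_assoc] at h
  have hk : k = 0 := by
    by_contra hk
    exact hp (hu.isUnit_of_dvd (mul_left_cancel h ▸ (dvd_pow_self p hk).mul_right v))
  rw [hk, add_zero]

end CancelCommMonoid

section PowProd

variable {M ι : Type*} [Fintype ι]

def prodPowHom [CommMonoid M] (e : ι → M) : Multiplicative (ι → ℕ) →* M where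
  toFun f := ∏ i, e i ^ f.toAdd i
  map_one' := by simp
  map_mul' f g := by simp [pow_add, Finset.prod_mul_distrib]

theorem prodPowHom_apply [CommMonoid M] (e : ι → M) (f : Multiplicative (ι → ℕ)) :
    prodPowHom e f = ∏ i, e i ^ f.toAdd i := rfl

theorem prodPowHom_surjective [CommMonoid M] {e : ι → M}
    (he : Submonoid.closure (Set.range e) = ⊤) : Function.Surjective (prodPowHom e) := fun x => by
  obtain ⟨f, rfl⟩ :=
    Submonoid.mem_closure_range_iff_of_fintype.mp (he ▸ Submonoid.mem_top x)
  exact ⟨ofAdd f, rfl⟩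

theorem prodPowHom_injective [CancelCommMonoid M] [DecompositionMonoid M]
    {e : ι → M} (he : ∀ i, ¬IsUnit (e i)) (hrel : Pairwise fun i j => IsRelPrime (e i) (e j)) :
    Function.Injective (prodPowHom e) := fun f g h => by
  classical
  refine toAdd.injective (funext fun i => ?_)
  have hcompl (f : Multiplicative (ι → ℕ)) : IsRelPrime (e i) (∏ j ∈ {i}ᶜ, e j ^ f.toAdd j) :=
    IsRelPrime.prod_right fun j hj => (hrel (by simpa [eq_comm] using hj)).pow_right
  rw [prodPowHom_apply, prodPowHom_apply, Fintype.prod_eq_mul_prod_compl i,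
    Fintype.prod_eq_mul_prod_compl i] at h
  exact eq_of_pow_mul_eq_pow_mul (he i) (hcompl f) (hcompl g) h

end PowProd

section TrivialUnits

variable {M : Type*} [Monoid M] [Subsingleton Mˣ]

theorem Irreducible.isRelPrime_of_ne {p q : M} (hp : Irreducible p) (hq : Irreducible q)
    (hpq : p ≠ q) : IsRelPrime p q :=
  hp.isRelPrime_iff_not_dvd.mpr fun h => hpq (associated_iff_eq.mp (hp.associated_of_dvd hq h))

theorem Irreducible.mem_of_closure_eq_top {s : Set M} (hs : Submonoid.closure s = ⊤) {p : M}
    (hp : Irreducible p) : p ∈ s := by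
  induction (hs ▸ Submonoid.mem_top p : p ∈ Submonoid.closure s)
    using Submonoid.closure_induction with
  | mem x hx => exact hx
  | one => exact absurd isUnit_one hp.not_isUnit
  | mul x y _ _ ihx ihy =>
    rcases hp.isUnit_or_isUnit rfl with hx | hy
    · rw [hx.eq_one, one_mul] at hp ⊢
      exact ihy hp
    · rw [hy.eq_one, mul_one] at hp ⊢
      exact ihx hp

theorem closure_setOf_irreducible_eq_top (ν : M → ℕ) (hν : ∀ a, a ≠ 1 → 0 < ν a)
    (hνmul : ∀ a b, ν a + ν b ≤ ν (a * b)) : Submonoid.closure {p : M | Irreducible p} = ⊤ := by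
  refine eq_top_iff.mpr fun a _ => ?_
  induction hN : ν a using Nat.strong_induction_on generalizing a with
  | _ N ih =>
  by_cases ha : a = 1
  · exact ha ▸ Submonoid.one_mem _
  by_cases hirr : Irreducible a
  · exact Submonoid.subset_closure hirr
  obtain ⟨b, c, rfl, hb, hc⟩ : ∃ b c, a = b * c ∧ b ≠ 1 ∧ c ≠ 1 := by
    simpa [irreducible_iff, ha] using hirr
  have := hνmul b c
  exact Submonoid.mul_mem _ (ih (ν b) (by have := hν c hc; omega) b trivial rfl)
    (ih (ν c) (by have := hν b hb; omega) c trivial rfl)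

end TrivialUnits

theorem Fintype.card_eq_of_injective_of_forall_eq_inv_mul {A σ : Type*} [Fintype A] [Fintype σ]
    (φ : Multiplicative (A → ℕ) →* Multiplicative (σ → ℤ)) (hinj : Function.Injective φ)
    (hfrac : ∀ g, ∃ a b, g = (φ a)⁻¹ * φ b) : Fintype.card A = Fintype.card σ := by
  classical
  let L : (A → ℤ) →ₗ[ℤ] σ → ℤ :=
    Fintype.linearCombination ℤ fun i => (φ (ofAdd (Pi.single i 1))).toAdd
  have hL (x : Multiplicative (A → ℕ)) : L (fun i => (x.toAdd i : ℤ)) = (φ x).toAdd := by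
    conv_rhs => rw [← prod_ofAdd_single_pow x]
    simp [L, Fintype.linearCombination_apply, toAdd_prod, Nat.cast_smul_eq_nsmul]
  have hLinj : Function.Injective L := by
    refine (injective_iff_map_eq_zero L).mpr fun z hz => ?_
    have hsplit : φ (ofAdd fun i => (z i).toNat) = φ (ofAdd fun i => (-z i).toNat) := by
      refine toAdd.injective ?_
      rw [← hL, ← hL, ← sub_eq_zero, ← map_sub, ← hz]
      exact congrArg L (funext fun i => Int.toNat_sub_toNat_neg (z i))
    funext i
    have := congrFun (congrArg toAdd (hinj hsplit)) i
    simp only [toAdd_ofAdd] at this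
    rw [← Int.toNat_sub_toNat_neg (z i), this, sub_self, Pi.zero_apply]
  have hLsurj : Function.Surjective L := fun y => by
    obtain ⟨a, b, h⟩ := hfrac (ofAdd y)
    refine ⟨(fun i => (b.toAdd i : ℤ)) - fun i => (a.toAdd i : ℤ), ?_⟩
    rw [map_sub, hL, hL, ← toAdd_ofAdd y, h, toAdd_mul, toAdd_inv, neg_add_eq_sub]
  simpa using (LinearEquiv.ofBijective L ⟨hLinj, hLsurj⟩).finrank_eq

theorem IsGarsideMonoid.nonempty_mulEquiv_pi_nat {M : Type*} [CancelCommMonoid M]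
    (hM : IsGarsideMonoid M) {σ : Type*} [Fintype σ] (ι : M →* Multiplicative (σ → ℤ))
    (hinj : Function.Injective ι) (hfrac : ∀ g, ∃ a b, g = (ι a)⁻¹ * ι b) :
    Nonempty (M ≃* Multiplicative (σ → ℕ)) := by
  have : Subsingleton Mˣ := .units_of_isUnit hM.conical
  have : DecompositionMonoid M := decompositionMonoid_of_forall_isRightLcm hM.right_lcm
  obtain ⟨ν, hν, hνmul⟩ := hM.atomic
  obtain ⟨Δ, -, hfin, hgen⟩ := hM.garside
  let A := {p : M | Irreducible p}
  have : Fintype A := (hfin.subset fun _ hp => hp.mem_of_closure_eq_top hgen).fintype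
  let e : Multiplicative (A → ℕ) ≃* M := MulEquiv.ofBijective (prodPowHom ((↑) : A → M))
    ⟨prodPowHom_injective (fun p => p.2.not_isUnit)
      (fun p q hpq => p.2.isRelPrime_of_ne q.2 (Subtype.coe_injective.ne hpq)),
    prodPowHom_surjective <| (Subtype.range_coe (s := A)).symm ▸
      closure_setOf_irreducible_eq_top ν hν hνmul⟩
  have hcard := Fintype.card_eq_of_injective_of_forall_eq_inv_mul (ι.comp e.toMonoidHom)
    (hinj.comp e.injective) fun g => by
      obtain ⟨a, b, h⟩ := hfrac g
      exact ⟨e.symm a, e.symm b, by simpa using h⟩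
  exact ⟨e.symm.trans
    (AddEquiv.arrowCongr (Fintype.equivOfCardEq hcard) (.refl ℕ)).toMultiplicative⟩

/-- `(ℕⁿ, +)` (written multiplicatively via `Multiplicative`) is a Garside monoid whose
group of fractions is `(ℤⁿ, +)`, and it is the unique Garside monoid with this group of
fractions, up to monoid isomorphism. -/
theorem freeAbelian_group_of_fractions_unique_garside (n : ℕ) :
    (IsGarsideMonoid (Multiplicative (Fin n → ℕ)) ∧
      ∃ ι : Multiplicative (Fin n → ℕ) →* Multiplicative (Fin n → ℤ),
        Function.Injective ι ∧
        ∀ g : Multiplicative (Fin n → ℤ),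
          ∃ a b : Multiplicative (Fin n → ℕ), g = (ι a)⁻¹ * ι b) ∧
    ∀ (M : Type v) (_ : Monoid M), IsGarsideMonoid M →
      ∀ ι : M →* Multiplicative (Fin n → ℤ), Function.Injective ι →
        (∀ g : Multiplicative (Fin n → ℤ), ∃ a b : M, g = (ι a)⁻¹ * ι b) →
        Nonempty (M ≃* Multiplicative (Fin n → ℕ)) := by
  refine ⟨⟨isGarsideMonoid_multiplicative_pi_nat, exists_injective_forall_eq_inv_mul_pi_int _⟩,
    fun M _ hM ι hinj hfrac => ?_⟩
  let : CancelCommMonoid M :=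
    { mul_comm a b := hinj (by rw [map_mul, map_mul, mul_comm])
      mul_left_cancel _ _ _ := hM.mul_left_cancel _ _ _ }
  exact hM.nonempty_mulEquiv_pi_nat ι hinj hfrac
end

section
/- Let M be a Garside monoid. For a, b ∈ M let a ∨ b denote the (unique) right lcm of a and b, and let a\b denote the unique element with a ∨ b = a·(a\b). Then for all a, b, c ∈ M the following identities hold: (ab) ∨ (ac) = a(b ∨ c); c\(ab) = (c\a)·((a\c)\b); (ab)\c = b\(a\c); (a ∨ b)\c = (a\b)\(a\c) = (b\a)\(b\c); and c\(a ∨ b) = (c\a) ∨ (c\b). -/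
/-! Left cancellativity and the absence of nontrivial units make left-divisibility a partial
order, so right lcms are unique, and each identity follows by exhibiting both sides, after a
common left factor is multiplied in, as right lcms of the same pair. Everything then reduces to
two facts about lcms: `(a·b) ∨ c = a·((a\c) ∨ b)` and `c ∨ (a ∨ b) = (c ∨ a) ∨ (c ∨ b)`. -/

theorem IsGarsideMonoid.isLeftCancelMul {M : Type*} [Monoid M] (hM : IsGarsideMonoid M) :
    IsLeftCancelMul M :=
  ⟨fun a _ _ => hM.mul_left_cancel a _ _⟩

theorem IsGarsideMonoid.subsingleton_units {M : Type*} [Monoid M] (hM : IsGarsideMonoid M) :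
    Subsingleton Mˣ :=
  ⟨fun u v => Units.ext <| (hM.conical u u.isUnit).trans (hM.conical v v.isUnit).symm⟩

theorem dvd_antisymm_of_subsingleton_units {M : Type*} [Monoid M] [IsLeftCancelMul M]
    [Subsingleton Mˣ] {a b : M}
    (hab : a ∣ b) (hba : b ∣ a) : a = b := by
  obtain ⟨u, rfl⟩ := hab
  obtain ⟨v, hv⟩ := hba
  have huv : u * v = 1 := mul_left_cancel (by rw [mul_one, ← mul_assoc, ← hv])
  have hvu : v * u = 1 := mul_left_cancel (a := u) (by rw [← mul_assoc, huv, one_mul, mul_one])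
  rw [show u = 1 from congr_arg Units.val (Subsingleton.elim (⟨u, v, huv, hvu⟩ : Mˣ) 1), mul_one]

namespace IsRightLcm

variable {M : Type*} [Monoid M] {a b c l m r : M}

theorem iff_dvd : IsRightLcm a b l ↔ a ∣ l ∧ b ∣ l ∧ ∀ d, a ∣ d → b ∣ d → l ∣ d :=
  Iff.rfl

theorem symm (h : IsRightLcm a b l) : IsRightLcm b a l :=
  ⟨h.2.1, h.1, fun d hb ha => h.2.2 d ha hb⟩

theorem unique [IsLeftCancelMul M] [Subsingleton Mˣ] (h : IsRightLcm a b l)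
    (h' : IsRightLcm a b m) : l = m :=
  dvd_antisymm_of_subsingleton_units (h.2.2 m h'.1 h'.2.1) (h'.2.2 l h.1 h.2.1)

theorem mul_left [IsLeftCancelMul M] (h : IsRightLcm b c m) (a : M) :
    IsRightLcm (a * b) (a * c) (a * m) := by
  rw [iff_dvd] at h ⊢
  refine ⟨mul_dvd_mul_left a h.1, mul_dvd_mul_left a h.2.1, ?_⟩
  rintro d ⟨x, rfl⟩ hcd
  rw [mul_assoc] at hcd ⊢
  have hc : c ∣ b * x := (IsLeftCancelMul.mul_left_cancel a).dvd_cancel_left.mp hcd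
  exact mul_dvd_mul_left a (h.2.2 _ (dvd_mul_right b x) hc)

theorem mul_of_complement [IsLeftCancelMul M] (hac : IsRightLcm a c (a * r))
    (hrb : IsRightLcm r b m) : IsRightLcm (a * b) c (a * m) := by
  rw [iff_dvd] at hac hrb ⊢
  refine ⟨mul_dvd_mul_left a hrb.2.1, hac.2.1.trans (mul_dvd_mul_left a hrb.1), ?_⟩
  rintro d ⟨x, rfl⟩ hcd
  rw [mul_assoc] at hcd ⊢
  have har : a * r ∣ a * (b * x) := hac.2.2 _ (dvd_mul_right a _) hcd
  have hr : r ∣ b * x := (IsLeftCancelMul.mul_left_cancel a).dvd_cancel_left.mp har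
  exact mul_dvd_mul_left a (hrb.2.2 _ hr (dvd_mul_right b x))

theorem sup_sup_distrib_left {p q x : M} (hab : IsRightLcm a b l) (hca : IsRightLcm c a p)
    (hcb : IsRightLcm c b q) (hcl : IsRightLcm c l x) : IsRightLcm p q x := by
  rw [iff_dvd] at hab hca hcb hcl ⊢
  refine ⟨hca.2.2 x hcl.1 (hab.1.trans hcl.2.1), hcb.2.2 x hcl.1 (hab.2.1.trans hcl.2.1), ?_⟩
  intro d hpd hqd
  exact hcl.2.2 d (hca.1.trans hpd) (hab.2.2 d (hca.2.1.trans hpd) (hcb.2.1.trans hqd))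

end IsRightLcm

/-- In a Garside monoid, with `lcm a b` the right lcm `a ∨ b` and `rc a b` the
unique element `a \ b` with `a ∨ b = a · (a \ b)`, the lcm identities hold. -/
theorem garside_lcm_identities {M : Type*} [Monoid M] (hM : IsGarsideMonoid M)
    (lcm rc : M → M → M)
    (hlcm : ∀ a b : M, IsRightLcm a b (lcm a b))
    (hrc : ∀ a b : M, lcm a b = a * rc a b) :
    ∀ a b c : M,
      lcm (a * b) (a * c) = a * lcm b c ∧
      rc c (a * b) = rc c a * rc (rc a c) b ∧
      rc (a * b) c = rc b (rc a c) ∧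
      rc (lcm a b) c = rc (rc a b) (rc a c) ∧
      rc (lcm a b) c = rc (rc b a) (rc b c) ∧
      rc c (lcm a b) = lcm (rc c a) (rc c b) := by
  have := hM.isLeftCancelMul
  have := hM.subsingleton_units
  have hlcm' : ∀ a b, IsRightLcm a b (a * rc a b) := fun a b => hrc a b ▸ hlcm a b
  have rc_mul_left : ∀ a b c, rc (a * b) c = rc b (rc a c) := fun a b c =>
    mul_left_cancel <| (hlcm' _ _).unique <| by
      simpa only [mul_assoc] using (hlcm' a c).mul_of_complement (hlcm' b (rc a c)).symm
  intro a b c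
  refine ⟨(hlcm _ _).unique ((hlcm b c).mul_left a), ?_, rc_mul_left a b c, ?_, ?_, ?_⟩
  · refine mul_left_cancel ((hlcm' c _).symm.unique ?_)
    have h := (hlcm' a c).mul_of_complement (hlcm' (rc a c) b)
    rwa [← mul_assoc, (hlcm' a c).unique (hlcm' c a).symm, mul_assoc] at h
  · rw [hrc a b, rc_mul_left]
  · rw [(hlcm a b).unique (hlcm' b a).symm, rc_mul_left]
  · exact mul_left_cancel <| ((hlcm a b).sup_sup_distrib_left (hlcm' c a) (hlcm' c b)
      (hlcm' c _)).unique ((hlcm (rc c a) (rc c b)).mul_left c)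
end
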